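/- For every integer k ≥ 1 and every integer n ≥ 2, g_{k−1}(n) − f_{k−1}(n) = f_{−k}(n) + p(n, k−1) − g'_{−k}(n). -/

import Mathlib

/-- `l` is a partition of `n`: a nonincreasing list of positive integers summing to `n`. -/
noncomputable def IsPartitionOf (n : ℕ) (l : List ℕ) : Prop :=
  l.Pairwise (· ≥ ·) ∧ (∀ x ∈ l, 0 < x) ∧ l.sum = n

/-- The partition `l` has a `k`-fixed point: `λ_i = i + k` for some (1-indexed) index `i`. -/
noncomputable def HasKFixedPoint (k : ℤ) (l : List ℕ) : Prop :=
  ∃ i : Fin l.length, (l.get i : ℤ) = (i.val : ℤ) + 1 + k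

/-- `f_k(n)`: the number of partitions of `n` with a `k`-fixed point. -/
noncomputable def fk (k : ℤ) (n : ℕ) : ℕ :=
  {l : List ℕ | IsPartitionOf n l ∧ HasKFixedPoint k l}.ncard

/-- `g_k(n)`: the number of partitions of `n` without a `k`-fixed point. -/
noncomputable def gk (k : ℤ) (n : ℕ) : ℕ :=
  {l : List ℕ | IsPartitionOf n l ∧ ¬ HasKFixedPoint k l}.ncard

/-- `mex_j(l)`: the smallest integer greater than `j` that is not a part of `l`. -/
noncomputable def mexJ (j : ℕ) (l : List ℕ) : ℕ := sInf {m : ℕ | j < m ∧ m ∉ l}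

/-- Dyson's crank of a partition. -/
noncomputable def crank (l : List ℕ) : ℤ :=
  if l.count 1 = 0 then (l.headI : ℤ)
  else ((l.filter (fun x => l.count 1 < x)).length : ℤ) - (l.count 1 : ℤ)

/-- `M(m,n)`: the number of partitions of `n` with crank `m`. -/
noncomputable def M (m : ℤ) (n : ℕ) : ℕ :=
  {l : List ℕ | IsPartitionOf n l ∧ crank l = m}.ncard

/-- `p(n)`: the number of partitions of `n`. -/
noncomputable def partitionCount (n : ℕ) : ℕ := {l : List ℕ | IsPartitionOf n l}.ncard

/-- `p(n,j)`: the number of partitions of `n` into at most `j` parts. -/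
noncomputable def pAtMost (n : ℕ) (j : ℤ) : ℕ :=
  {l : List ℕ | IsPartitionOf n l ∧ (l.length : ℤ) ≤ j}.ncard

/-- `g'_{-k}(n)`: partitions of `n` with at least `k` parts and no `-k`-fixed point. -/
noncomputable def gneg (k : ℕ) (n : ℕ) : ℕ :=
  {l : List ℕ | IsPartitionOf n l ∧ k ≤ l.length ∧
    ∀ i : Fin l.length, (l.get i : ℤ) ≠ (i.val : ℤ) + 1 - k}.ncard

/-- `(q;q)_i = ∏_{m=1}^{i} (1 - q^m)` as a formal power series over `ℤ`. -/
noncomputable def qPoch (i : ℕ) : PowerSeries ℤ :=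
  ∏ m ∈ Finset.range i, (1 - PowerSeries.X ^ (m + 1))

/-!
Every partition of `n` is counted once by `f_{k-1}(n) + g_{k-1}(n)`, and once by
`p(n, k-1) + f_{-k}(n) + g'_{-k}(n)`, because a partition with a `(-k)`-fixed point has more than
`k` parts. Conjugation (transposing the Young diagram) maps the partitions with a `(k-1)`-fixed
point bijectively onto those counted by `g'_{-k}`, so `f_{k-1}(n) = g'_{-k}(n)`, and subtracting the
two decompositions of `p(n)` gives the identity.
-/

namespace YoungDiagram

theorem card_transpose (μ : YoungDiagram) : μ.transpose.card = μ.card :=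
  Finset.card_map _

theorem rowLen_pos_iff (μ : YoungDiagram) {i : ℕ} : 0 < μ.rowLen i ↔ i < μ.colLen 0 := by
  rw [← mem_iff_lt_rowLen, mem_iff_lt_colLen]

theorem sum_rowLens (μ : YoungDiagram) : μ.rowLens.sum = μ.card := by
  have hrow : ∀ c ∈ μ.cells, c.1 ∈ Finset.range (μ.colLen 0) := fun c hc => by
    rw [Finset.mem_range, ← mem_iff_lt_colLen]
    exact μ.up_left_mem le_rfl (Nat.zero_le _) ((mem_cells c).1 hc)
  rw [YoungDiagram.card, Finset.card_eq_sum_card_fiberwise hrow]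
  simp only [rowLens, Finset.sum, Finset.range_val, Multiset.range, Multiset.map_coe,
    Multiset.sum_coe]
  exact congrArg List.sum (List.map_congr_left fun i _ => μ.rowLen_eq_card)

/-- Along the staircase `(0, j), (0, j + 1), (1, j + 1), (1, j + 2), …` membership in `μ`
switches off exactly once: either inside a row (a row of length `i + j + 1`) or inside a
column (a column `i + j + 1` of length `i + 1`). -/
theorem exists_rowLen_eq_iff (μ : YoungDiagram) (j : ℕ) :
    (∃ i, μ.rowLen i = i + j + 1) ↔ j < μ.rowLen 0 ∧ ∀ i, μ.colLen (i + j + 1) ≠ i + 1 := by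
  constructor
  · rintro ⟨i, hi⟩
    refine ⟨by have := μ.rowLen_anti 0 i (Nat.zero_le i); omega, fun i' hi' => ?_⟩
    have hin : (i, i + j) ∈ μ := mem_iff_lt_rowLen.2 (by omega)
    have hout : (i, i + j + 1) ∉ μ := by rw [mem_iff_lt_rowLen]; omega
    have hin' : (i', i' + j + 1) ∈ μ := mem_iff_lt_colLen.2 (by omega)
    have hout' : (i' + 1, i' + j + 1) ∉ μ := by rw [mem_iff_lt_colLen]; omega
    rcases le_or_gt i i' with h | h
    · exact hout (μ.up_left_mem h (by omega) hin')
    · exact hout' (μ.up_left_mem h (by omega) hin)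
  · rintro ⟨h0, hcol⟩
    by_contra! hrow
    have hdiag : ∀ i, i + j < μ.rowLen i := by
      intro i
      induction i with
      | zero => simpa using h0
      | succ i ih =>
        have h1 : i < μ.colLen (i + j + 1) :=
          mem_iff_lt_colLen.1 (mem_iff_lt_rowLen.2 (by have := hrow i; omega))
        have h2 : (i + 1, i + j + 1) ∈ μ := mem_iff_lt_colLen.2 (by have := hcol i; omega)
        rw [mem_iff_lt_rowLen] at h2
        omega
    exact lt_irrefl _ (μ.rowLen_pos_iff.1 (by have := hdiag (μ.colLen 0); omega))

end YoungDiagram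

theorem isPartitionOf_rowLens_iff (μ : YoungDiagram) (n : ℕ) :
    IsPartitionOf n μ.rowLens ↔ μ.card = n := by
  rw [IsPartitionOf, μ.sum_rowLens]
  exact ⟨fun h => h.2.2,
    fun h => ⟨List.sortedGE_iff_pairwise.1 μ.rowLens_sorted, μ.pos_of_mem_rowLens, h⟩⟩

theorem ncard_setOf_isPartitionOf (n : ℕ) (Q : List ℕ → Prop) :
    {l | IsPartitionOf n l ∧ Q l}.ncard = {μ : YoungDiagram | μ.card = n ∧ Q μ.rowLens}.ncard := by
  have hinj : Function.Injective YoungDiagram.rowLens := fun μ ν h =>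
    YoungDiagram.equivListRowLens.injective (Subtype.ext h)
  rw [← Set.ncard_image_of_injective _ hinj]
  congr 1
  ext l
  constructor
  · rintro ⟨hl, hQ⟩
    obtain ⟨hsorted, hpos, -⟩ := id hl
    have hrow := YoungDiagram.rowLens_ofRowLens_eq_self
      (hw := List.sortedGE_iff_pairwise.2 hsorted) hpos
    refine ⟨_, ⟨?_, ?_⟩, hrow⟩
    · rwa [← isPartitionOf_rowLens_iff, hrow]
    · rwa [hrow]
  · rintro ⟨μ, ⟨hcard, hQ⟩, rfl⟩
    exact ⟨(isPartitionOf_rowLens_iff μ n).2 hcard, hQ⟩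

theorem hasKFixedPoint_rowLens_iff (μ : YoungDiagram) (z : ℤ) :
    HasKFixedPoint z μ.rowLens ↔ ∃ i, 0 < μ.rowLen i ∧ (μ.rowLen i : ℤ) = i + 1 + z := by
  constructor
  · rintro ⟨⟨i, hi⟩, h⟩
    exact ⟨i, μ.rowLen_pos_iff.2 (by simpa using hi), by simpa using h⟩
  · rintro ⟨i, hpos, h⟩
    exact ⟨⟨i, by simpa using μ.rowLen_pos_iff.1 hpos⟩, by simpa using h⟩

theorem hasKFixedPoint_natCast_rowLens_iff (μ : YoungDiagram) (j : ℕ) :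
    HasKFixedPoint j μ.rowLens ↔ ∃ i, μ.rowLen i = i + j + 1 := by
  rw [hasKFixedPoint_rowLens_iff]
  refine exists_congr fun i => ⟨fun ⟨_, h⟩ => by omega, fun h => ⟨by omega, by omega⟩⟩

theorem hasKFixedPoint_neg_rowLens_iff (μ : YoungDiagram) (j : ℕ) :
    HasKFixedPoint (-(j + 1)) μ.rowLens ↔ ∃ i, μ.rowLen (i + j + 1) = i + 1 := by
  rw [hasKFixedPoint_rowLens_iff]
  constructor
  · rintro ⟨r, hpos, h⟩
    obtain ⟨i, rfl⟩ : ∃ i, r = i + j + 1 := ⟨r - (j + 1), by omega⟩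
    exact ⟨i, by omega⟩
  · rintro ⟨i, h⟩
    exact ⟨i + j + 1, by omega, by push_cast; omega⟩

theorem hasKFixedPoint_iff_transpose (μ : YoungDiagram) (j : ℕ) :
    HasKFixedPoint j μ.rowLens ↔
      j + 1 ≤ μ.transpose.rowLens.length ∧ ¬HasKFixedPoint (-(j + 1)) μ.transpose.rowLens := by
  rw [hasKFixedPoint_natCast_rowLens_iff, hasKFixedPoint_neg_rowLens_iff, μ.exists_rowLen_eq_iff,
    YoungDiagram.length_rowLens, YoungDiagram.colLen_transpose]
  simp only [YoungDiagram.rowLen_transpose, not_exists, Nat.lt_iff_add_one_le]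

theorem forall_ne_iff_not_hasKFixedPoint_neg (l : List ℕ) (k : ℤ) :
    (∀ i : Fin l.length, (l.get i : ℤ) ≠ i.val + 1 - k) ↔ ¬HasKFixedPoint (-k) l := by
  simp [HasKFixedPoint, sub_eq_add_neg]

theorem fk_natCast_eq_gneg (j n : ℕ) : fk j n = gneg (j + 1) n := by
  simp only [fk, gneg, forall_ne_iff_not_hasKFixedPoint_neg, ncard_setOf_isPartitionOf,
    hasKFixedPoint_iff_transpose]
  have hinv : Function.Involutive YoungDiagram.transpose := YoungDiagram.transpose_transpose
  rw [← Set.ncard_image_of_injective _ hinv.injective, hinv.image_eq_preimage_symm]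
  congr 1
  ext ν
  simp [YoungDiagram.card_transpose]

theorem finite_setOf_isPartitionOf (n : ℕ) : {l | IsPartitionOf n l}.Finite := by
  refine Set.Finite.of_finite_image (f := ((↑) : List ℕ → Multiset ℕ))
    ((Set.finite_range (Nat.Partition.parts (n := n))).subset ?_) ?_
  · rintro _ ⟨l, ⟨-, hpos, hsum⟩, rfl⟩
    exact ⟨⟨l, hpos _, hsum⟩, rfl⟩
  · intro l₁ h₁ l₂ h₂ h
    exact (Multiset.coe_eq_coe.1 h).eq_of_sortedGE (List.sortedGE_iff_pairwise.2 h₁.1)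
      (List.sortedGE_iff_pairwise.2 h₂.1)

theorem Set.ncard_sep_add_ncard_sep_not {α : Type*} {s : Set α} (hs : s.Finite) (p : α → Prop) :
    {x ∈ s | p x}.ncard + {x ∈ s | ¬p x}.ncard = s.ncard := by
  rw [← Set.ncard_union_eq _ (hs.subset fun _ h => h.1) (hs.subset fun _ h => h.1)]
  · congr 1
    ext x
    simp only [Set.mem_union, Set.mem_sep_iff]
    tauto
  · exact Set.disjoint_left.2 fun _ h h' => h'.2 h.2

theorem fk_add_gk (z : ℤ) (n : ℕ) : fk z n + gk z n = partitionCount n :=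
  Set.ncard_sep_add_ncard_sep_not (finite_setOf_isPartitionOf n) _

theorem HasKFixedPoint.lt_length {l : List ℕ} {k : ℕ} (h : HasKFixedPoint (-k) l)
    (hpos : ∀ x ∈ l, 0 < x) : k < l.length := by
  obtain ⟨i, hi⟩ := h
  have := hpos _ (l.get_mem i)
  have := i.isLt
  omega

theorem pAtMost_add_fk_neg_add_gneg (k n : ℕ) :
    pAtMost n (k - 1) + fk (-k) n + gneg k n = partitionCount n := by
  set P := {l | IsPartitionOf n l}
  have hP : P.Finite := finite_setOf_isPartitionOf n
  set Q := {l ∈ P | k ≤ l.length}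
  have hshort : pAtMost n (k - 1) = {l ∈ P | ¬k ≤ l.length}.ncard := by
    simp only [pAtMost]
    congr 1
    ext l
    exact and_congr_right fun _ => by omega
  have hfixed : fk (-k) n = {l ∈ Q | HasKFixedPoint (-k) l}.ncard := by
    simp only [fk]
    congr 1
    ext l
    exact ⟨fun h => ⟨⟨h.1, (h.2.lt_length h.1.2.1).le⟩, h.2⟩, fun h => ⟨h.1.1, h.2⟩⟩
  have hfree : gneg k n = {l ∈ Q | ¬HasKFixedPoint (-k) l}.ncard := by
    simp only [gneg, forall_ne_iff_not_hasKFixedPoint_neg]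
    congr 1
    ext l
    exact and_assoc.symm
  rw [hshort, hfixed, hfree, add_assoc, Set.ncard_sep_add_ncard_sep_not (hP.subset fun _ h => h.1),
    add_comm, Set.ncard_sep_add_ncard_sep_not hP, partitionCount]

theorem stmt19_general (k : ℕ) (hk : 1 ≤ k) (n : ℕ) :
    (gk ((k : ℤ) - 1) n : ℤ) - (fk ((k : ℤ) - 1) n : ℤ) =
      (fk (-(k : ℤ)) n : ℤ) + (pAtMost n ((k : ℤ) - 1) : ℤ) - (gneg k n : ℤ) := by
  obtain ⟨j, rfl⟩ : ∃ j, k = j + 1 := ⟨k - 1, by omega⟩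
  have hconj := fk_natCast_eq_gneg j n
  have hfixed := fk_add_gk j n
  have hparts := pAtMost_add_fk_neg_add_gneg (j + 1) n
  push_cast at hparts ⊢
  simp only [add_sub_cancel_right] at hparts ⊢
  omega

theorem stmt19 (k : ℕ) (hk : 1 ≤ k) (n : ℕ) (hn : 2 ≤ n) :
    (gk ((k : ℤ) - 1) n : ℤ) - (fk ((k : ℤ) - 1) n : ℤ) =
      (fk (-(k : ℤ)) n : ℤ) + (pAtMost n ((k : ℤ) - 1) : ℤ) - (gneg k n : ℤ) :=
  stmt19_general k hk n
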